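/- For any nonzero integer n, the 1-forms ω₁ = cos(nθ₁)dθ₂ + sin(nθ₁)dθ₃ and ω₂ = −sin(nθ₁)dθ₂ + cos(nθ₁)dθ₃ on the 3-torus satisfy: for all λ₁, λ₂ with λ₁² + λ₂² = 1, setting ω = λ₁ω₁ + λ₂ω₂, one has ω ∧ dω = −n dθ₁ ∧ dθ₂ ∧ dθ₃. In particular (ω₁, ω₂) generates a taut contact circle on 𝕋³. -/

import Mathlib

open scoped BigOperators

noncomputable section

abbrev E3 : Type := Fin 3 → ℝ

/-- `ω₁ = cos(nθ₁)dθ₂ + sin(nθ₁)dθ₃` on the 3-torus (angular coordinates). -/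
def ω₁ (n : ℤ) (θ v : E3) : ℝ :=
  Real.cos (n * θ 0) * v 1 + Real.sin (n * θ 0) * v 2

/-- `ω₂ = −sin(nθ₁)dθ₂ + cos(nθ₁)dθ₃` on the 3-torus (angular coordinates). -/
def ω₂ (n : ℤ) (θ v : E3) : ℝ :=
  -Real.sin (n * θ 0) * v 1 + Real.cos (n * θ 0) * v 2

/-- Exterior derivative of a 1-form, evaluated at `x` on `u, v`. -/
def extd (ω : E3 → E3 → ℝ) (x u v : E3) : ℝ :=
  fderiv ℝ (fun y => ω y v) x u - fderiv ℝ (fun y => ω y u) x v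

/-- Evaluation of the 3-form `a ∧ b` (degrees 1, 2) on three vectors. -/
def wedge12 (a : E3 → ℝ) (b : E3 → E3 → ℝ) (v : Fin 3 → E3) : ℝ :=
  (1 / 2 : ℝ) * ∑ σ : Equiv.Perm (Fin 3),
    ((Equiv.Perm.sign σ : ℤ) : ℝ) * a (v (σ 0)) * b (v (σ 1)) (v (σ 2))

/-! In the coframe `dθ₁, α = λ₁dθ₂ + λ₂dθ₃, β = −λ₂dθ₂ + λ₁dθ₃`, the form `ω = λ₁ω₁ + λ₂ω₂` reads
`cos(nθ₁) α + sin(nθ₁) β`, so `dω = n dθ₁ ∧ (−sin(nθ₁) α + cos(nθ₁) β)` and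
`ω ∧ dω = n (cos² + sin²)(nθ₁) α ∧ dθ₁ ∧ β = −n (λ₁² + λ₂²) dθ₁ ∧ dθ₂ ∧ dθ₃`. -/

theorem wedge12_apply (a : E3 → ℝ) (b : E3 → E3 → ℝ) (v : Fin 3 → E3) :
    wedge12 a b v = (a (v 0) * (b (v 1) (v 2) - b (v 2) (v 1))
      + a (v 1) * (b (v 2) (v 0) - b (v 0) (v 2))
      + a (v 2) * (b (v 0) (v 1) - b (v 1) (v 0))) / 2 := by
  -- `simp` rewrites `Fin.succ 1` to `2`, which blocks `decomposeFin_symm_apply_succ`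
  have h (p : Fin 3) : Equiv.Perm.decomposeFin.symm (p, Equiv.swap 0 1) 2 = Equiv.swap 0 p 1 :=
    Equiv.Perm.decomposeFin_symm_apply_succ _ p 1
  simp only [wedge12, Finset.univ_perm_fin_succ, Finset.sum_map, Equiv.toEmbedding_apply,
    Fintype.sum_prod_type, Fin.sum_univ_succ, Fin.sum_univ_zero]
  simp only [one_div, Finset.univ_unique, Equiv.Perm.default_eq, Nat.succ_eq_add_one,
    Nat.reduceAdd, Fin.isValue, Equiv.Perm.decomposeFin.symm_sign, ↓reduceIte, one_mul,
    Equiv.Perm.decomposeFin_symm_apply_zero, Equiv.Perm.decomposeFin_symm_apply_one,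
    Equiv.swap_self, Fin.succ_zero_eq_one, Equiv.refl_apply, Finset.sum_singleton,
    Equiv.Perm.sign_one, Units.val_one, Int.cast_one, Equiv.Perm.decomposeFin_symm_of_one,
    Equiv.Perm.decomposeFin_symm_of_refl, add_zero, one_ne_zero, neg_mul, mul_neg, Units.val_neg,
    Int.cast_neg, Fin.succ_one_eq_two, Finset.sum_neg_distrib, h, Equiv.swap_apply_right,
    Equiv.swap_apply_def, Fin.reduceEq, neg_neg]
  ring

theorem hasFDerivAt_cos_mul_add_sin_mul (k P Q : ℝ) (θ : E3) :
    HasFDerivAt (fun y : E3 => Real.cos (k * y 0) * P + Real.sin (k * y 0) * Q)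
      ((k * (-Real.sin (k * θ 0) * P + Real.cos (k * θ 0) * Q)) •
        ContinuousLinearMap.proj (R := ℝ) (φ := fun _ : Fin 3 => ℝ) 0) θ := by
  have h0 : HasFDerivAt (fun y : E3 => k * y 0)
      (k • ContinuousLinearMap.proj (R := ℝ) (φ := fun _ : Fin 3 => ℝ) 0) θ :=
    (hasFDerivAt_apply 0 θ).const_mul k
  refine ((((Real.hasDerivAt_cos _).comp_hasFDerivAt θ h0).mul_const P).add
    (((Real.hasDerivAt_sin _).comp_hasFDerivAt θ h0).mul_const Q)).congr_fderiv ?_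
  ext u
  simp only [neg_smul, smul_neg, add_apply, neg_apply, smul_apply,
    ContinuousLinearMap.proj_apply, smul_eq_mul]
  ring

theorem extd_cos_mul_add_sin_mul (k : ℝ) (P Q : E3 → ℝ) (θ u w : E3) :
    extd (fun y w => Real.cos (k * y 0) * P w + Real.sin (k * y 0) * Q w) θ u w
      = k * (u 0 * (-Real.sin (k * θ 0) * P w + Real.cos (k * θ 0) * Q w)
        - w 0 * (-Real.sin (k * θ 0) * P u + Real.cos (k * θ 0) * Q u)) := by
  simp only [extd, (hasFDerivAt_cos_mul_add_sin_mul _ _ _ θ).fderiv, smul_apply,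
    ContinuousLinearMap.proj_apply, smul_eq_mul]
  ring

theorem linComb_ω₁_ω₂_eq_cos_mul_add_sin_mul (n : ℤ) (l₁ l₂ : ℝ) (y w : E3) :
    l₁ * ω₁ n y w + l₂ * ω₂ n y w
      = Real.cos (n * y 0) * (l₁ * w 1 + l₂ * w 2)
        + Real.sin (n * y 0) * (-l₂ * w 1 + l₁ * w 2) := by
  simp only [ω₁, ω₂]
  ring

theorem stmt4_general (n : ℤ) (l₁ l₂ : ℝ) (hl : l₁ ^ 2 + l₂ ^ 2 = 1)
    (θ : E3) (v : Fin 3 → E3) :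
    wedge12 (fun w => l₁ * ω₁ n θ w + l₂ * ω₂ n θ w)
      (extd (fun y w => l₁ * ω₁ n y w + l₂ * ω₂ n y w) θ) v
    = -(n : ℝ) * Matrix.det (Matrix.of fun i j : Fin 3 => v i j) := by
  have h3form : wedge12 (fun w => l₁ * ω₁ n θ w + l₂ * ω₂ n θ w)
        (extd (fun y w => l₁ * ω₁ n y w + l₂ * ω₂ n y w) θ) v
      = -(n : ℝ) * ((Real.sin (n * θ 0) ^ 2 + Real.cos (n * θ 0) ^ 2) * (l₁ ^ 2 + l₂ ^ 2))
        * Matrix.det (Matrix.of fun i j : Fin 3 => v i j) := by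
    simp only [linComb_ω₁_ω₂_eq_cos_mul_add_sin_mul, wedge12_apply, extd_cos_mul_add_sin_mul,
      Matrix.det_fin_three, Matrix.of_apply]
    ring
  rw [h3form, Real.sin_sq_add_cos_sq, hl]
  ring

/-- For any nonzero integer `n`, every normalized combination
`ω = λ₁ω₁ + λ₂ω₂` of `ω₁ = cos(nθ₁)dθ₂ + sin(nθ₁)dθ₃` and
`ω₂ = −sin(nθ₁)dθ₂ + cos(nθ₁)dθ₃` on 𝕋³ satisfies
`ω ∧ dω = −n dθ₁ ∧ dθ₂ ∧ dθ₃`; in particular `(ω₁, ω₂)` generates a taut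
contact circle on 𝕋³. -/
theorem stmt4 (n : ℤ) (hn : n ≠ 0) (l₁ l₂ : ℝ) (hl : l₁ ^ 2 + l₂ ^ 2 = 1)
    (θ : E3) (v : Fin 3 → E3) :
    wedge12 (fun w => l₁ * ω₁ n θ w + l₂ * ω₂ n θ w)
      (extd (fun y w => l₁ * ω₁ n y w + l₂ * ω₂ n y w) θ) v
    = -(n : ℝ) * Matrix.det (Matrix.of fun i j : Fin 3 => v i j) :=
  stmt4_general n l₁ l₂ hl θ v

end
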